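/- Let R ⊆ S be a strongly local extension of commutative rings. Then S is J-regular if and only if R is J-regular, R ⊆ S is an integral extension, and R ⊆ S is seminormal. Moreover, if these equivalent conditions hold, then J(R) = J(S): the Jacobson radical of S is contained in R and coincides with the Jacobson radical of R. -/

import Mathlib

/-- A ring extension `R ⊆ S` is *strongly local* if `U(R) = U(S)`. -/
def Subring.IsSLExt {S : Type*} [CommRing S] (R : Subring S) : Prop :=
  ∀ x y : S, x * y = 1 → x ∈ R ∧ y ∈ R

/-- A commutative ring `R` is *J-regular* if `R/J(R)` is von Neumann regular, i.e.
for every `x ∈ R` there exists `y` with `x²y − x ∈ J(R)`. -/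
def IsJRegular (R : Type*) [CommRing R] : Prop :=
  ∀ x : R, ∃ y : R, x ^ 2 * y - x ∈ Ideal.jacobson (⊥ : Ideal R)

/-!
If `S` is J-regular, every `x : S` factors as `x = u * e` with `u` a unit and `e` idempotent
modulo `J(S)`. Strong locality puts `u`, `u⁻¹` and `J(S) = (1 + J(S)) - 1` inside `R`, so
`e ^ 2 - e ∈ R`: this makes `e`, hence `x`, integral over `R`, makes `R` J-regular, and gives
`b ∈ R` as soon as `b ^ 2 ∈ R`. Conversely, a ring is J-regular exactly when every prime
containing its Jacobson radical is maximal (`R / J(R)` is reduced), and by lying over this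
passes from `R` to any integral extension `S`; in an integral extension maximal ideals contract
to maximal ideals, so `J(R) ⊆ J(S)`.
-/

open Ideal

theorem Ideal.exists_notMem_mul_pow_mem_of_mem_minimalPrimes {A : Type*} [CommSemiring A]
    {I p : Ideal A} (hp : p ∈ I.minimalPrimes) {x : A} (hx : x ∈ p) :
    ∃ y ∉ p, ∃ n : ℕ, y * x ^ n ∈ I := by
  have : p.IsPrime := hp.1.1
  by_contra! h
  have hdisj : Disjoint (I : Set A) (p.primeCompl ⊔ Submonoid.powers x : Submonoid A) := by
    rw [Set.disjoint_left]
    rintro _ hI hM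
    obtain ⟨y, hy, _, ⟨n, rfl⟩, rfl⟩ := Submonoid.mem_sup.mp hM
    exact h y hy n hI
  obtain ⟨q, hq, hIq, hqM⟩ := Ideal.exists_le_prime_disjoint I _ hdisj
  have hqp : q ≤ p := fun z hz ↦ by_contra fun hzp ↦
    Set.disjoint_left.mp hqM hz (Submonoid.mem_sup_left (show z ∈ p.primeCompl from hzp))
  exact Set.disjoint_left.mp hqM (hp.2 ⟨hq, hIq⟩ hqp hx)
    (Submonoid.mem_sup_right (Submonoid.mem_powers x))

theorem isJRegular_of_forall_isMaximal {S : Type*} [CommRing S]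
    (h : ∀ q : Ideal S, q.IsPrime → jacobson ⊥ ≤ q → q.IsMaximal) : IsJRegular S := by
  intro x
  set J : Ideal S := jacobson ⊥
  have hJ : J.IsRadical := isRadical_jacobson ⊥
  -- a maximal ideal containing `x ^ 2` and `J : x` would be minimal over `J`, and there `x`
  -- must be a zero divisor modulo `J`
  have hK : span {x ^ 2} ⊔ J.colon (span {x}) = ⊤ := by
    by_contra hK
    obtain ⟨m, hm, hKm⟩ := exists_le_maximal _ hK
    have hJm : J ≤ m := fun j hj ↦ hKm (Submodule.mem_sup_right
      (mem_colon_span_singleton.mpr (J.mul_mem_right x hj)))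
    have hmin : m ∈ J.minimalPrimes := ⟨⟨hm.isPrime, hJm⟩, fun q ⟨hq, hJq⟩ hqm ↦
      ((h q hq hJq).eq_of_le hm.ne_top hqm).ge⟩
    have hxm : x ∈ m :=
      hm.isPrime.mem_of_pow_mem 2 (hKm (mem_sup_left (mem_span_singleton_self _)))
    obtain ⟨y, hym, n, hyn⟩ := exists_notMem_mul_pow_mem_of_mem_minimalPrimes hmin hxm
    have hyx : y * x ∈ J := hJ ⟨n + 1, by
      rw [show (y * x) ^ (n + 1) = y * x ^ n * (y ^ n * x) by ring]
      exact J.mul_mem_right _ hyn⟩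
    exact hym (hKm (mem_sup_right (mem_colon_span_singleton.mpr hyx)))
  obtain ⟨a, ha, b, hb, hab⟩ := Submodule.mem_sup.mp (hK ▸ Submodule.mem_top : (1 : S) ∈ _)
  obtain ⟨s, rfl⟩ := mem_span_singleton'.mp ha
  refine ⟨s * x, ?_⟩
  rw [show x ^ 2 * (s * x) - x = -(b * x) by linear_combination x * hab]
  exact J.neg_mem (mem_colon_span_singleton.mp hb)

theorem IsJRegular.isMaximal_of_isPrime {R : Type*} [CommRing R] (hR : IsJRegular R)
    {p : Ideal R} (hp : p.IsPrime) (hJp : jacobson ⊥ ≤ p) : p.IsMaximal := by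
  rw [isMaximal_iff]
  refine ⟨(p.ne_top_iff_one).mp hp.ne_top, fun I b hpI hbp hbI ↦ ?_⟩
  obtain ⟨c, hc⟩ := hR b
  have hbc : b * (b * c - 1) ∈ p := by
    rw [show b * (b * c - 1) = b ^ 2 * c - b by ring]
    exact hJp hc
  have hbc' : b * c - 1 ∈ I := hpI ((hp.mem_or_mem hbc).resolve_left hbp)
  simpa using I.sub_mem (I.mul_mem_right c hbI) hbc'

theorem jacobson_bot_le_comap_of_isIntegral {R S : Type*} [CommRing R] [CommRing S]
    [Algebra R S] [Algebra.IsIntegral R S] :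
    jacobson (⊥ : Ideal R) ≤ (jacobson (⊥ : Ideal S)).comap (algebraMap R S) := by
  intro a ha
  rw [jacobson, mem_sInf] at ha
  rw [mem_comap, jacobson, mem_sInf]
  rintro m ⟨-, hm⟩
  exact ha ⟨bot_le, isMaximal_comap_of_isIntegral_of_isMaximal m⟩

theorem IsJRegular.of_isIntegral {R S : Type*} [CommRing R] [CommRing S]
    [Algebra R S] [Algebra.IsIntegral R S] (hR : IsJRegular R) : IsJRegular S := by
  refine isJRegular_of_forall_isMaximal fun q hq hJq ↦ ?_
  refine isMaximal_of_isIntegral_of_isMaximal_comap q (hR.isMaximal_of_isPrime (hq.comap _) ?_)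
  exact jacobson_bot_le_comap_of_isIntegral.trans (comap_mono hJq)

theorem IsJRegular.exists_eq_unit_mul {S : Type*} [CommRing S] (hS : IsJRegular S) (x : S) :
    ∃ (u : Sˣ) (e : S), x = u * e ∧ e ^ 2 - e ∈ jacobson (⊥ : Ideal S) := by
  set J : Ideal S := jacobson ⊥
  obtain ⟨y, hy⟩ := hS x
  set z := y * x * y
  have hxzx : x * z * x - x ∈ J := by
    rw [show x * z * x - x = (x ^ 2 * y - x) * (1 + y * x) by ring]
    exact J.mul_mem_right _ hy
  have hzxz : z * x * z - z ∈ J := by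
    rw [show z * x * z - z = y * (x * z * x - x) * y by ring]
    exact J.mul_mem_right _ (J.mul_mem_left _ hxzx)
  -- `z` is a quasi-inverse of `x` modulo `J`, so `x + 1 - x z` has inverse `z + 1 - x z` modulo `J`
  have hunit : IsUnit (x + 1 - x * z) := by
    refine isUnit_of_mul_isUnit_left (y := z + 1 - x * z) ?_
    have h := mem_jacobson_bot.mp
      (J.sub_mem (J.sub_mem (J.mul_mem_right z hxzx) hxzx) hzxz) 1
    convert h using 1
    ring
  obtain ⟨u, hu⟩ := hunit
  have hinv : (x + 1 - x * z) * ↑u⁻¹ = 1 := hu ▸ u.mul_inv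
  refine ⟨u, ↑u⁻¹ * x, by simp, ?_⟩
  rw [show (↑u⁻¹ * x) ^ 2 - ↑u⁻¹ * x = (x * z * x - x) * ↑u⁻¹ ^ 2 by
    linear_combination (↑u⁻¹ * x) * hinv]
  exact J.mul_mem_right _ hxzx

theorem isIntegral_of_sq_sub_self_eq {R S : Type*} [CommRing R] [CommRing S] [Algebra R S]
    {e : S} {r : R} (h : e ^ 2 - e = algebraMap R S r) : IsIntegral R e := by
  refine ⟨Polynomial.X ^ 2 - (Polynomial.X + Polynomial.C r), Polynomial.monic_X_pow_sub ?_, ?_⟩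
  · exact (Polynomial.degree_add_le_of_degree_le (n := 1) Polynomial.degree_X_le
      (Polynomial.degree_C_le.trans zero_le_one)).trans_lt (by norm_num)
  · simp [← h]

namespace Subring.IsSLExt

variable {S : Type*} [CommRing S] {R : Subring S}

theorem mem_of_mem_jacobson (hSL : R.IsSLExt) {x : S} (hx : x ∈ jacobson (⊥ : Ideal S)) :
    x ∈ R := by
  obtain ⟨u, hu⟩ := mem_jacobson_bot.mp hx 1
  have h1 : x * 1 + 1 ∈ R := (hSL _ _ (hu ▸ u.mul_inv)).1
  simpa using R.sub_mem h1 R.one_mem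

theorem mem_jacobson_of_coe_mem (hSL : R.IsSLExt) {a : R}
    (ha : (a : S) ∈ jacobson (⊥ : Ideal S)) : a ∈ jacobson (⊥ : Ideal R) := by
  refine mem_jacobson_bot.mpr fun r ↦ ?_
  obtain ⟨u, hu⟩ := mem_jacobson_bot.mp ha r
  have hinv : ((a : S) * r + 1) * ↑u⁻¹ = 1 := hu ▸ u.mul_inv
  exact .of_mul_eq_one ⟨_, (hSL _ _ hinv).2⟩ (Subtype.ext hinv)

theorem exists_eq_mul (hSL : R.IsSLExt) (hS : IsJRegular S) (x : S) :
    ∃ u v e : S, u ∈ R ∧ v ∈ R ∧ u * v = 1 ∧ x = u * e ∧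
      e ^ 2 - e ∈ jacobson (⊥ : Ideal S) := by
  obtain ⟨u, e, hx, he⟩ := hS.exists_eq_unit_mul x
  obtain ⟨hu, hv⟩ := hSL _ _ u.mul_inv
  exact ⟨u, _, e, hu, hv, u.mul_inv, hx, he⟩

theorem isJRegular (hSL : R.IsSLExt) (hS : IsJRegular S) : IsJRegular R := by
  intro x
  obtain ⟨u, v, e, -, hv, huv, hx, he⟩ := hSL.exists_eq_mul hS x
  refine ⟨⟨v, hv⟩, hSL.mem_jacobson_of_coe_mem ?_⟩
  have h : (x : S) ^ 2 * v - x = (e ^ 2 - e) * u := by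
    rw [hx]
    linear_combination u * e ^ 2 * huv
  simpa [h] using (jacobson ⊥).mul_mem_right u he

theorem isIntegral (hSL : R.IsSLExt) (hS : IsJRegular S) (x : S) : IsIntegral R x := by
  obtain ⟨u, -, e, hu, -, -, rfl, he⟩ := hSL.exists_eq_mul hS x
  have he' : IsIntegral R e :=
    isIntegral_of_sq_sub_self_eq (r := ⟨_, hSL.mem_of_mem_jacobson he⟩) rfl
  exact (isIntegral_algebraMap (x := (⟨u, hu⟩ : R))).mul he'

theorem mem_of_sq_mem (hSL : R.IsSLExt) (hS : IsJRegular S) {b : S} (hb : b ^ 2 ∈ R) :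
    b ∈ R := by
  obtain ⟨u, v, e, hu, hv, huv, rfl, he⟩ := hSL.exists_eq_mul hS b
  have he2 : e ^ 2 ∈ R := by
    rw [show e ^ 2 = v ^ 2 * (u * e) ^ 2 by linear_combination (-(e ^ 2) * (u * v + 1)) * huv]
    exact R.mul_mem (R.pow_mem hv 2) hb
  have he : e ∈ R := by
    simpa using R.sub_mem he2 (hSL.mem_of_mem_jacobson he)
  exact R.mul_mem hu he

theorem image_jacobson_eq [Algebra.IsIntegral R S] (hSL : R.IsSLExt) :
    Subtype.val '' (jacobson (⊥ : Ideal R) : Set R) = (jacobson (⊥ : Ideal S) : Set S) := by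
  refine Set.Subset.antisymm ?_ fun x hx ↦ ?_
  · rintro _ ⟨a, ha, rfl⟩
    exact Ideal.mem_comap.mp (jacobson_bot_le_comap_of_isIntegral (S := S) ha)
  · exact ⟨⟨x, hSL.mem_of_mem_jacobson hx⟩, hSL.mem_jacobson_of_coe_mem hx, rfl⟩

end Subring.IsSLExt

theorem SL_J_regular_characterization {S : Type*} [CommRing S] (R : Subring S)
    (hSL : R.IsSLExt) :
    -- `S` is J-regular iff `R` is J-regular and `R ⊆ S` is integral and seminormal
    (IsJRegular S ↔
      (IsJRegular R ∧ (∀ x : S, IsIntegral R x) ∧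
        (∀ b : S, b ^ 2 ∈ R → b ^ 3 ∈ R → b ∈ R))) ∧
    -- if these conditions hold then `J(R) = J(S)`
    (IsJRegular S →
      Subtype.val '' (Ideal.jacobson (⊥ : Ideal R) : Set ↥R) =
        (Ideal.jacobson (⊥ : Ideal S) : Set S)) := by
  refine ⟨⟨fun hS ↦ ⟨hSL.isJRegular hS, hSL.isIntegral hS,
    fun b hb2 _ ↦ hSL.mem_of_sq_mem hS hb2⟩, ?_⟩, fun hS ↦ ?_⟩
  · rintro ⟨hR, hInt, -⟩
    have : Algebra.IsIntegral R S := ⟨hInt⟩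
    exact hR.of_isIntegral
  · have : Algebra.IsIntegral R S := ⟨hSL.isIntegral hS⟩
    exact hSL.image_jacobson_eq
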